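/- Expected preference of the last car: for all integers 1 ≤ m ≤ n and every real p ∈ [0,1], Σ_{j=1}^{n} j·Q_{m,n,p}(j) = (n+2p)/2 − (p − 1/2)·((m-1)!/(n+1)^{m-1})·Σ_{s=0}^{m-1} (n+1)^{s}/s!. (Equivalently, the subtracted factor ((m-1)!/(n+1)^{m-1})·Σ_{s=0}^{m-1}(n+1)^s/s! equals e^{n+1}(m-1)!·P(Z ≤ m-1)/(n+1)^{m-1} for Z a Poisson random variable with parameter n+1.) -/

import Mathlib

/-- `T m n s = C(m-1,s)·(n-s)^(m-s-2)·(s+1)^(s-1)` in `ℝ`, with integer (possibly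
negative) exponents interpreted via `zpow`. -/
noncomputable def T (m n s : ℕ) : ℝ :=
  ((m - 1).choose s : ℝ) * ((n : ℝ) - s) ^ ((m : ℤ) - s - 2) * ((s : ℝ) + 1) ^ ((s : ℤ) - 1)

/-- `Q m n p j` is the conditional probability that the last of `m` cars prefers spot
`j ∈ {1,…,n}` given that all cars park, in the probabilistic parking model on `n` spots
with forward-probability `p` (Theorem 3 of Durmić–Han–Harris–Ribeiro–Yin):
`Q_{m,n,p}(j) = (n-m+2)/((n-m+1)(n+1)) − (1/(n+1)^(m-1))·
  [ p·Σ_{s=n-j+1}^{m-1} T(s) + (1-p)·Σ_{s=j}^{m-1} T(s) ]`. -/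
noncomputable def Q (m n : ℕ) (p : ℝ) (j : ℕ) : ℝ :=
  ((n : ℝ) - m + 2) / (((n : ℝ) - m + 1) * ((n : ℝ) + 1)) -
    1 / ((n : ℝ) + 1) ^ (m - 1) *
      (p * ∑ s ∈ Finset.Icc (n - j + 1) (m - 1), T m n s +
        (1 - p) * ∑ s ∈ Finset.Icc j (m - 1), T m n s)

/-- Total variation distance between `Q m n p` and the uniform distribution on `{1,…,n}`:
`(1/2)·Σ_{j=1}^n |Q_{m,n,p}(j) − 1/n|`. -/
noncomputable def tvUni (m n : ℕ) (p : ℝ) : ℝ :=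
  1 / 2 * ∑ j ∈ Finset.Icc 1 n, |Q m n p j - 1 / (n : ℝ)|

open Finset
open scoped Nat

/-! With `k = m - 1`, exchanging the order of summation turns the expected value into a
combination of three moments of `s ↦ T (k + 1) n s`: its sums against `n - s`, `s + 1` and
`(n - s) (s + 1)`. Once the negative powers in `T` are cleared, all three are Abel sums
`Σ C(k,s) (x + s)^s (y - s)^(k - s)`, and these equal `k! Σ_{i ≤ k} (x + y)^i / i!`: as
functions of `y` both sides have derivative `k` times the same expression for `k - 1`, and at
`y = -x` the Abel sum is the `k`-th forward difference of `t ↦ t^k`, which is `k!`. -/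

noncomputable def truncExp (k : ℕ) (z : ℝ) : ℝ :=
  ∑ i ∈ range (k + 1), z ^ i / i !

theorem truncExp_zero_right (k : ℕ) : truncExp k 0 = 1 := by
  simp [truncExp, sum_range_succ']

theorem factorial_mul_truncExp_succ (k : ℕ) (z : ℝ) :
    ((k + 1) ! : ℝ) * truncExp (k + 1) z
      = (k + 1) * ((k ! : ℝ) * truncExp k z) + z ^ (k + 1) := by
  rw [truncExp, sum_range_succ, ← truncExp, Nat.factorial_succ]
  push_cast
  field_simp

theorem hasDerivAt_truncExp_succ (k : ℕ) (z : ℝ) :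
    HasDerivAt (truncExp (k + 1)) (truncExp k z) z := by
  have h : ∀ i ∈ range (k + 1),
      HasDerivAt (fun z : ℝ => z ^ (i + 1) / (i + 1) !) (z ^ i / i !) z := by
    intro i _
    refine ((hasDerivAt_pow (i + 1) z).div_const ((i + 1) ! : ℝ)).congr_deriv ?_
    rw [Nat.factorial_succ]
    push_cast
    field_simp
  have hsum : truncExp (k + 1)
      = fun z : ℝ => ∑ i ∈ range (k + 1), z ^ (i + 1) / ((i + 1) ! : ℝ) + 1 := by
    ext z
    simp [truncExp, sum_range_succ' _ (k + 1)]
  rw [hsum]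
  exact (HasDerivAt.fun_sum h).add_const 1

noncomputable def abelSum (k : ℕ) (x y : ℝ) : ℝ :=
  ∑ s ∈ range (k + 1), (k.choose s : ℝ) * (x + s) ^ s * (y - s) ^ (k - s)

theorem abelSum_neg_right (k : ℕ) (x : ℝ) : abelSum k x (-x) = k ! := by
  have h := congr_fun (fwdDiff_iter_eq_factorial (R := ℝ) (n := k)) x
  rw [fwdDiff_iter_eq_sum_shift, Pi.natCast_apply] at h
  rw [← h, abelSum]
  refine sum_congr rfl fun s hs => ?_
  have hsk : s + (k - s) = k := Nat.add_sub_cancel' (Nat.lt_succ_iff.mp (mem_range.mp hs))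
  rw [show -x - s = (-1) * (x + s) by ring, mul_pow, zsmul_eq_mul, nsmul_eq_mul]
  push_cast
  rw [mul_one, show (x + s) ^ k = (x + s) ^ s * (x + s) ^ (k - s) by rw [← pow_add, hsk]]
  ring

theorem cast_succ_sub_mul_choose (k s : ℕ) (hs : s ≤ k + 1) :
    ((k + 1 : ℝ) - s) * ((k + 1).choose s) = (k + 1) * k.choose s := by
  rw [← Nat.cast_succ, ← Nat.cast_sub hs]
  exact_mod_cast by rw [mul_comm, ← Nat.choose_mul_succ_eq, mul_comm]

theorem hasDerivAt_abelSum_succ (k : ℕ) (x y : ℝ) :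
    HasDerivAt (abelSum (k + 1) x) ((k + 1) * abelSum k x y) y := by
  have h : ∀ s ∈ range (k + 2), HasDerivAt
      (fun y : ℝ => ((k + 1).choose s : ℝ) * (x + s) ^ s * (y - s) ^ (k + 1 - s))
      ((k + 1 - s : ℕ) * ((k + 1).choose s : ℝ) * (x + s) ^ s * (y - s) ^ (k - s)) y := by
    intro s _
    refine ((((hasDerivAt_id y).sub_const (s : ℝ)).pow (k + 1 - s)).const_mul
      (((k + 1).choose s : ℝ) * (x + s) ^ s)).congr_deriv ?_
    rw [show k + 1 - s - 1 = k - s by omega, id]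
    ring
  refine (HasDerivAt.fun_sum h).congr_deriv ?_
  rw [sum_range_succ, Nat.sub_self, Nat.cast_zero, zero_mul, zero_mul, zero_mul, add_zero,
    abelSum, mul_sum]
  refine sum_congr rfl fun s hs => ?_
  have hs' : s ≤ k + 1 := (mem_range.mp hs).le
  rw [Nat.cast_sub hs', Nat.cast_succ]
  linear_combination ((x + s) ^ s * (y - s) ^ (k - s)) * cast_succ_sub_mul_choose k s hs'

theorem abelSum_eq (k : ℕ) (x y : ℝ) : abelSum k x y = k ! * truncExp k (x + y) := by
  induction k generalizing y with
  | zero => simp [abelSum, truncExp]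
  | succ k ih =>
    have hderiv : ∀ y, HasDerivAt
        (fun y => abelSum (k + 1) x y - (k + 1)! * truncExp (k + 1) (x + y)) 0 y := by
      intro y
      have h := (hasDerivAt_abelSum_succ k x y).sub
        (((hasDerivAt_truncExp_succ k (x + y)).comp y ((hasDerivAt_id y).const_add x)).const_mul
          ((k + 1)! : ℝ))
      refine h.congr_deriv ?_
      rw [ih, Nat.factorial_succ]
      push_cast
      ring
    have := is_const_of_deriv_eq_zero (fun y => (hderiv y).differentiableAt)
      (fun y => (hderiv y).deriv) y (-x)
    rw [abelSum_neg_right, add_neg_cancel, truncExp_zero_right] at this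
    linarith

theorem abelSum_succ_sub (k : ℕ) (x y : ℝ) :
    abelSum (k + 1) x y - (k + 1) * abelSum k x y = (x + y) ^ (k + 1) := by
  rw [abelSum_eq, abelSum_eq, factorial_mul_truncExp_succ]
  ring

theorem abelSum_succ_sub_shift (k : ℕ) (x y : ℝ) :
    abelSum (k + 1) x y - (k + 1) * abelSum k (x + 1) (y - 1) = (x + y) ^ (k + 1) := by
  rw [abelSum_eq, abelSum_eq, factorial_mul_truncExp_succ, show x + 1 + (y - 1) = x + y by ring]
  ring

theorem sum_mul_choose_mul_pow_pred (k : ℕ) (x y : ℝ) :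
    ∑ s ∈ range (k + 2),
        (s : ℝ) * ((k + 1).choose s) * (x + s) ^ (s - 1) * (y - s) ^ (k + 1 - s)
      = (k + 1) * abelSum k (x + 1) (y - 1) := by
  rw [sum_range_succ', Nat.cast_zero, zero_mul, zero_mul, zero_mul, add_zero, abelSum, mul_sum]
  refine sum_congr rfl fun s _ => ?_
  have hc : ((s + 1 : ℕ) : ℝ) * ((k + 1).choose (s + 1)) = (k + 1) * k.choose s := by
    exact_mod_cast by rw [mul_comm, ← Nat.add_one_mul_choose_eq]
  rw [hc, Nat.add_sub_cancel, Nat.add_sub_add_right]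
  push_cast
  ring

-- The truncated exponent `s - 1` is harmless at `s = 0`, where the base is `1`.
theorem succ_pow_pred_mul_succ (s : ℕ) : ((s : ℝ) + 1) ^ (s - 1) * (s + 1) = (s + 1) ^ s := by
  cases s with
  | zero => simp
  | succ t => rw [Nat.add_sub_cancel, ← pow_succ]

-- Abel's identity `Σ C(k,s) x (x + s)^(s - 1) (y - s)^(k - s) = (x + y)^k` at `x = 1`.
theorem sum_choose_mul_succ_pow_pred (k : ℕ) (y : ℝ) :
    ∑ s ∈ range (k + 1), (k.choose s : ℝ) * (s + 1) ^ (s - 1) * (y - s) ^ (k - s)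
      = (y + 1) ^ k := by
  cases k with
  | zero => simp
  | succ k =>
    have hsplit : ∀ s ∈ range (k + 2),
        ((k + 1).choose s : ℝ) * (s + 1) ^ (s - 1) * (y - s) ^ (k + 1 - s)
          = ((k + 1).choose s : ℝ) * (1 + s) ^ s * (y - s) ^ (k + 1 - s)
            - s * ((k + 1).choose s) * (1 + s) ^ (s - 1) * (y - s) ^ (k + 1 - s) := by
      intro s _
      rw [add_comm 1 (s : ℝ), ← succ_pow_pred_mul_succ]
      ring
    rw [sum_congr rfl hsplit, sum_sub_distrib, sum_mul_choose_mul_pow_pred, ← abelSum,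
      abelSum_succ_sub_shift, add_comm]

theorem T_succ_mul_sub (k n s : ℕ) (hs : s ≤ k) (hsn : s < n) :
    T (k + 1) n s * (n - s) = k.choose s * (s + 1) ^ (s - 1) * (n - s) ^ (k - s) := by
  have hns : (n : ℝ) - s ≠ 0 := sub_ne_zero.mpr (by exact_mod_cast hsn.ne')
  have hexp : ((k + 1 : ℕ) : ℤ) - s - 2 = ((k - s : ℕ) : ℤ) - 1 := by push_cast [hs]; ring
  have hsucc : ((s : ℝ) + 1) ^ ((s : ℤ) - 1) = (s + 1) ^ (s - 1) := by
    cases s with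
    | zero => simp
    | succ t => rw [Nat.add_sub_cancel, show ((t + 1 : ℕ) : ℤ) - 1 = t by omega, zpow_natCast]
  rw [T, Nat.add_sub_cancel, hexp, hsucc, zpow_sub_one₀ hns, zpow_natCast]
  field_simp

theorem sum_T_mul_sub (k n : ℕ) (hk : k < n) :
    ∑ s ∈ range (k + 1), T (k + 1) n s * (n - s) = ((n : ℝ) + 1) ^ k := by
  rw [← sum_choose_mul_succ_pow_pred]
  refine sum_congr rfl fun s hs => ?_
  have hs' := mem_range.mp hs
  exact T_succ_mul_sub k n s (by omega) (by omega)

theorem sum_T_mul_sub_mul_succ (k n : ℕ) (hk : k < n) :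
    ∑ s ∈ range (k + 1), T (k + 1) n s * ((n - s) * (s + 1)) = abelSum k 1 n := by
  refine sum_congr rfl fun s hs => ?_
  have hs' := mem_range.mp hs
  rw [← mul_assoc, T_succ_mul_sub k n s (by omega) (by omega), add_comm 1 (s : ℝ),
    ← succ_pow_pred_mul_succ]
  ring

theorem T_eq_zero_of_lt (k n s : ℕ) (hs : k < s) : T (k + 1) n s = 0 := by
  rw [T, Nat.add_sub_cancel, Nat.choose_eq_zero_of_lt hs, Nat.cast_zero, zero_mul, zero_mul]

theorem sub_mul_T_succ_succ (k n s : ℕ) (hs : s ≤ k + 1) (hsn : s < n) :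
    ((k + 1 : ℝ) - s) * T (k + 1 + 1) n s = (k + 1) * (T (k + 1) n s * (n - s)) := by
  have hns : (n : ℝ) - s ≠ 0 := sub_ne_zero.mpr (by exact_mod_cast hsn.ne')
  have hexp : ((k + 1 + 1 : ℕ) : ℤ) - s - 2 = ((k + 1 : ℕ) : ℤ) - s - 2 + 1 := by
    push_cast; ring
  rw [T, T, hexp, zpow_add_one₀ hns, Nat.add_sub_cancel, Nat.add_sub_cancel]
  linear_combination
    ((n - s : ℝ) ^ (((k + 1 : ℕ) : ℤ) - s - 2) * (n - s) * (s + 1) ^ ((s : ℤ) - 1))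
      * cast_succ_sub_mul_choose k s hs

theorem sum_T_mul_succ (k n : ℕ) (hk : k < n) :
    ∑ s ∈ range (k + 1), T (k + 1) n s * (s + 1) = ((n : ℝ) + 1) ^ k / (n - k) := by
  have hnk : (n : ℝ) - k ≠ 0 := sub_ne_zero.mpr (by exact_mod_cast hk.ne')
  rw [eq_div_iff hnk, sum_mul]
  cases k with
  | zero =>
    have hn : (n : ℝ) ≠ 0 := by simpa using hnk
    simp [T, hn]
  | succ k =>
    -- split `n - (k + 1) = (n - s) - (k + 1 - s)`
    have hterm : ∀ s ∈ range (k + 1 + 1), T (k + 1 + 1) n s * (s + 1) * (n - (k + 1 : ℕ))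
        = T (k + 1 + 1) n s * ((n - s) * (s + 1))
          - (k + 1) * (T (k + 1) n s * ((n - s) * (s + 1))) := by
      intro s hs
      have hs' := mem_range.mp hs
      push_cast
      linear_combination (-(s + 1 : ℝ)) * sub_mul_T_succ_succ k n s (by omega) (by omega)
    rw [sum_congr rfl hterm, sum_sub_distrib, ← mul_sum, sum_T_mul_sub_mul_succ (k + 1) n hk,
      sum_range_succ (fun s => T (k + 1) n s * _), T_eq_zero_of_lt k n (k + 1) (by omega),
      zero_mul, add_zero, sum_T_mul_sub_mul_succ k n (by omega), abelSum_succ_sub, add_comm]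

theorem sum_Icc_natCast (a s : ℕ) :
    ∑ j ∈ Icc (a + 1) (a + s), (j : ℝ) = s * (2 * a + s + 1) / 2 := by
  induction s with
  | zero => simp
  | succ s ih =>
    rw [← add_assoc, sum_Icc_succ_top (by omega), ih]
    push_cast
    ring

theorem sum_natCast_mul_sum_Icc (f : ℕ → ℝ) (k n : ℕ) (hkn : k ≤ n) :
    ∑ j ∈ Icc 1 n, (j : ℝ) * ∑ s ∈ Icc j k, f s
      = ∑ s ∈ range (k + 1), f s * (s * (s + 1) / 2) := by
  simp_rw [mul_sum]
  rw [sum_comm' (t' := range (k + 1)) (s' := fun s => Icc 1 s) (by intro j s; simp; omega)]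
  refine sum_congr rfl fun s _ => ?_
  rw [← sum_mul, mul_comm, show Icc 1 s = Icc (0 + 1) (0 + s) by simp, sum_Icc_natCast]
  push_cast
  ring

theorem sum_natCast_mul_sum_Icc_sub (f : ℕ → ℝ) (k n : ℕ) (hkn : k ≤ n) :
    ∑ j ∈ Icc 1 n, (j : ℝ) * ∑ s ∈ Icc (n - j + 1) k, f s
      = ∑ s ∈ range (k + 1), f s * (s * (2 * n - s + 1) / 2) := by
  simp_rw [mul_sum]
  rw [sum_comm' (t' := range (k + 1)) (s' := fun s => Icc (n - s + 1) n)
    (by intro j s; simp; omega)]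
  refine sum_congr rfl fun s hs => ?_
  have hsn : s ≤ n := by simp at hs; omega
  rw [← sum_mul, mul_comm]
  nth_rw 2 [← Nat.sub_add_cancel hsn]
  rw [sum_Icc_natCast, Nat.cast_sub hsn]
  ring

theorem sum_natCast_mul_Q (k n : ℕ) (hk : k < n) (p : ℝ) :
    ∑ j ∈ Icc 1 n, (j : ℝ) * Q (k + 1) n p j
      = (n - k + 1) / ((n - k) * (n + 1)) * (n * (n + 1) / 2)
        - 1 / ((n : ℝ) + 1) ^ k * (n / 2 * ∑ s ∈ range (k + 1), T (k + 1) n s * (s + 1)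
          + (p - 1 / 2) * ∑ s ∈ range (k + 1), T (k + 1) n s * ((n - s) * (s + 1))
          - p * ∑ s ∈ range (k + 1), T (k + 1) n s * (n - s)) := by
  have hQ : ∀ j ∈ Icc 1 n, (j : ℝ) * Q (k + 1) n p j
      = (n - k + 1) / ((n - k) * (n + 1)) * j
        - 1 / ((n : ℝ) + 1) ^ k * (p * (j * ∑ s ∈ Icc (n - j + 1) k, T (k + 1) n s)
          + (1 - p) * (j * ∑ s ∈ Icc j k, T (k + 1) n s)) := by
    intro j _
    rw [Q, Nat.add_sub_cancel]
    push_cast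
    ring
  rw [sum_congr rfl hQ, sum_sub_distrib, ← mul_sum, ← mul_sum, sum_add_distrib, ← mul_sum,
    ← mul_sum, show Icc 1 n = Icc (0 + 1) (0 + n) by simp, sum_Icc_natCast, zero_add, zero_add,
    sum_natCast_mul_sum_Icc_sub _ k n hk.le, sum_natCast_mul_sum_Icc _ k n hk.le]
  simp only [mul_sum, ← sum_add_distrib, ← sum_sub_distrib]
  push_cast
  congr 1
  · ring
  · refine sum_congr rfl fun s _ => ?_
    ring

theorem Q_expected_value_general (m n : ℕ) (hm : 1 ≤ m) (hmn : m ≤ n)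
    (p : ℝ) :
    ∑ j ∈ Finset.Icc 1 n, (j : ℝ) * Q m n p j =
      ((n : ℝ) + 2 * p) / 2 -
        (p - 1 / 2) * (((m - 1).factorial : ℝ) / ((n : ℝ) + 1) ^ (m - 1)) *
          ∑ s ∈ Finset.range m, ((n : ℝ) + 1) ^ s / (s.factorial : ℝ) := by
  obtain ⟨k, rfl⟩ : ∃ k, m = k + 1 := ⟨m - 1, by omega⟩
  have hk : k < n := hmn
  have hnk : (n : ℝ) - k ≠ 0 := sub_ne_zero.mpr (by exact_mod_cast hk.ne')
  rw [sum_natCast_mul_Q k n hk, sum_T_mul_succ k n hk, sum_T_mul_sub_mul_succ k n hk,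
    sum_T_mul_sub k n hk, abelSum_eq, Nat.add_sub_cancel, ← truncExp, add_comm 1 (n : ℝ)]
  field_simp
  ring

/-- Expected preference of the last car: for `1 ≤ m ≤ n` and `p ∈ [0,1]`,
`Σ_{j=1}^n j·Q_{m,n,p}(j) = (n+2p)/2 − (p−1/2)·((m-1)!/(n+1)^(m-1))·Σ_{s=0}^{m-1}(n+1)^s/s!`
(the subtracted factor equals `e^(n+1)(m-1)!·P(Z ≤ m-1)/(n+1)^(m-1)` for `Z` Poisson of
parameter `n+1`). -/
theorem Q_expected_value (m n : ℕ) (hm : 1 ≤ m) (hmn : m ≤ n)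
    (p : ℝ) (hp0 : 0 ≤ p) (hp1 : p ≤ 1) :
    ∑ j ∈ Finset.Icc 1 n, (j : ℝ) * Q m n p j =
      ((n : ℝ) + 2 * p) / 2 -
        (p - 1 / 2) * (((m - 1).factorial : ℝ) / ((n : ℝ) + 1) ^ (m - 1)) *
          ∑ s ∈ Finset.range m, ((n : ℝ) + 1) ^ s / (s.factorial : ℝ) :=
  Q_expected_value_general m n hm hmn p
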